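/- arXiv:2106.02553 — 2 statements merged into one kernel-verified Lean document; each statement's English description precedes it below -/
import Mathlib

section
/- For a grouped K-armed bandit instance, the utilitarian optimum over the feasible set of the Nash program equals the disagreement regret minus the optimal total regret: max{ ∑_{g ∈ 𝒢} s^g(q) : q feasible } = ∑_{g ∈ 𝒢} ∑_{a ∈ 𝒜_sub^g} Δ^g(a)·J^g(a) − ∑_{a ∈ 𝒜_sub} (min_{g ∈ 𝒢_a} Δ^g(a))·J(a), and the maximum is attained by any feasible q that, for each a ∈ 𝒜_sub, puts q^g(a) = 1 for some g attaining min_{g ∈ 𝒢_a} Δ^g(a). -/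
open scoped Classical
open Finset

noncomputable section

/-- Bernoulli KL divergence `kl(p,q)`. -/
def klB (p q : ℝ) : ℝ :=
  p * Real.log (p / q) + (1 - p) * Real.log ((1 - p) / (1 - q))

/-- A grouped `K`-armed bandit instance: a finite set of arms `A`, a finite set of groups `G`,
for each group a nonempty set of accessible arms (every arm accessible to some group),
and mean rewards `θ` with values in `(0,1)`. -/
structure GroupedBandit (A G : Type*) [Fintype A] [Fintype G] where
  acc : G → Finset A
  acc_nonempty : ∀ g, (acc g).Nonempty
  acc_cover : ∀ a, ∃ g, a ∈ acc g
  θ : A → ℝ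
  θ_mem : ∀ a, θ a ∈ Set.Ioo (0 : ℝ) 1

namespace GroupedBandit

variable {A G : Type*} [Fintype A] [Fintype G] (I : GroupedBandit A G)

/-- `OPT(g) = max_{a ∈ 𝒜^g} θ(a)`. -/
def OPT (g : G) : ℝ := (I.acc g).sup' (I.acc_nonempty g) I.θ

/-- `Δ^g(a) = OPT(g) − θ(a)`. -/
def Δ (g : G) (a : A) : ℝ := I.OPT g - I.θ a

/-- `𝒢_a = {g : a ∈ 𝒜^g}`. -/
def Ga (a : A) : Finset G := Finset.univ.filter (fun g => a ∈ I.acc g)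

lemma Ga_nonempty (a : A) : (I.Ga a).Nonempty := by
  obtain ⟨g, hg⟩ := I.acc_cover a
  exact ⟨g, by simp [Ga, hg]⟩

/-- `𝒜_sub^g = {a ∈ 𝒜^g : θ(a) < OPT(g)}`. -/
def Asubg (g : G) : Finset A := (I.acc g).filter (fun a => I.θ a < I.OPT g)

/-- `𝒜_sub = {a : a ∈ 𝒜_sub^g for every g ∈ 𝒢_a}`. -/
def Asub : Finset A := Finset.univ.filter (fun a => ∀ g ∈ I.Ga a, a ∈ I.Asubg g)

/-- `J^g(a) = 1 / kl(θ(a), OPT(g))`. -/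
def Jg (g : G) (a : A) : ℝ := 1 / klB (I.θ a) (I.OPT g)

/-- `J(a) = max_{g ∈ 𝒢_a} J^g(a)`. -/
def J (a : A) : ℝ := (I.Ga a).sup' (I.Ga_nonempty a) fun g => I.Jg g a

/-- Feasibility for the Nash program `P(θ)`. -/
def Feasible (q : G → A → ℝ) : Prop :=
  (∀ g a, 0 ≤ q g a) ∧
  (∀ a ∈ I.Asub, ∑ g, q g a = 1) ∧
  (∀ g a, ¬(a ∈ I.Asub ∧ a ∈ I.acc g) → q g a = 0)

/-- `s^g(q)`, the utility gain of group `g` under allocation `q`. -/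
def s (q : G → A → ℝ) (g : G) : ℝ :=
  ∑ a ∈ I.Asubg g, I.Δ g a * I.Jg g a
    - ∑ a ∈ I.Asubg g ∩ I.Asub, I.Δ g a * q g a * I.J a

/-- `q` is a maximizer of the Nash program `P(θ)` with value `> −∞`:
it is feasible, all `s^g(q) > 0`, and it dominates (in Nash social welfare) every feasible
point with finite value. -/
def NashOptimal (q : G → A → ℝ) : Prop :=
  I.Feasible q ∧ (∀ g, 0 < I.s q g) ∧
  ∀ q', I.Feasible q' → (∀ g, 0 < I.s q' g) →
    ∑ g, Real.log (I.s q' g) ≤ ∑ g, Real.log (I.s q g)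

/-- Assumption 1: every group has a suboptimal arm shared with another group. -/
def Assumption1 : Prop :=
  ∀ g, ∃ a ∈ I.acc g, I.θ a < I.OPT g ∧ 2 ≤ (I.Ga a).card

/-- Star topology: at least two groups; every arm is either shared by all groups or exclusive
to one group; there is at least one shared arm; every shared arm is strictly worse than every
group's optimum. -/
def Star : Prop :=
  2 ≤ Fintype.card G ∧
  (∀ a : A, I.Ga a = Finset.univ ∨ (I.Ga a).card = 1) ∧
  (∃ a : A, I.Ga a = Finset.univ) ∧
  (∀ a : A, I.Ga a = Finset.univ → ∀ g : G, I.θ a < I.OPT g)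

end GroupedBandit

end

section Aux

lemma klB_pos_aux {p q : ℝ} (hp : p ∈ Set.Ioo (0 : ℝ) 1) (hq : q ∈ Set.Ioo (0 : ℝ) 1)
    (hne : p ≠ q) : 0 < klB p q := by
  obtain ⟨hp0, hp1⟩ := hp
  obtain ⟨hq0, hq1⟩ := hq
  have h1 : Real.log (q / p) < q / p - 1 := by
    refine Real.log_lt_sub_one_of_pos (div_pos hq0 hp0) ?_
    refine fun h => hne ?_
    field_simp at h
    linarith
  have h2 : Real.log ((1 - q) / (1 - p)) ≤ (1 - q) / (1 - p) - 1 :=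
    Real.log_le_sub_one_of_pos (div_pos (by linarith) (by linarith))
  have e1 : p * (q / p - 1) = q - p := by field_simp
  have e2 : (1 - p) * ((1 - q) / (1 - p) - 1) = p - q := by
    rw [mul_sub, mul_div_cancel₀ _ (by linarith : (1:ℝ) - p ≠ 0)]
    ring
  have h3 : p * Real.log (q / p) + (1 - p) * Real.log ((1 - q) / (1 - p)) < 0 := by
    have := mul_lt_mul_of_pos_left h1 hp0
    have := mul_le_mul_of_nonneg_left h2 (by linarith : (0:ℝ) ≤ 1 - p)
    nlinarith
  have l1 : Real.log (p / q) = -Real.log (q / p) := by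
    rw [← Real.log_inv, inv_div]
  have l2 : Real.log ((1 - p) / (1 - q)) = -Real.log ((1 - q) / (1 - p)) := by
    rw [← Real.log_inv, inv_div]
  unfold klB
  rw [l1, l2]
  nlinarith

namespace GroupedBandit

variable {A G : Type*} [Fintype A] [Fintype G] (I : GroupedBandit A G)

lemma mem_Ga_iff {a : A} {g : G} : g ∈ I.Ga a ↔ a ∈ I.acc g := by
  simp [Ga]

lemma mem_Asubg_iff {a : A} {g : G} :
    a ∈ I.Asubg g ↔ a ∈ I.acc g ∧ I.θ a < I.OPT g := by
  simp [Asubg]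

lemma mem_Asub_iff {a : A} : a ∈ I.Asub ↔ ∀ g ∈ I.Ga a, a ∈ I.Asubg g := by
  simp [Asub]

lemma OPT_mem (g : G) : I.OPT g ∈ Set.Ioo (0 : ℝ) 1 := by
  obtain ⟨a, _, ha⟩ := Finset.exists_mem_eq_sup' (I.acc_nonempty g) I.θ
  rw [OPT, ha]
  exact I.θ_mem a

lemma Jg_pos {a : A} {g : G} (h : a ∈ I.Asubg g) : 0 < I.Jg g a := by
  rw [mem_Asubg_iff] at h
  have hkl : 0 < klB (I.θ a) (I.OPT g) :=
    klB_pos_aux (I.θ_mem a) (I.OPT_mem g) (ne_of_lt h.2)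
  exact div_pos one_pos hkl

lemma J_pos {a : A} (ha : a ∈ I.Asub) : 0 < I.J a := by
  obtain ⟨g, hg, hgeq⟩ := Finset.exists_mem_eq_sup' (I.Ga_nonempty a) fun g => I.Jg g a
  rw [J, hgeq]
  exact I.Jg_pos ((I.mem_Asub_iff).1 ha g hg)

lemma sum_q_eq_one {q : G → A → ℝ} (hq : I.Feasible q) {a : A} (ha : a ∈ I.Asub) :
    ∑ g ∈ I.Ga a, q g a = 1 := by
  rw [← hq.2.1 a ha]
  apply Finset.sum_subset (Finset.subset_univ _)
  intro g _ hg
  exact hq.2.2 g a (by rw [← mem_Ga_iff] at *; tauto)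

lemma sum_s_eq {q : G → A → ℝ} (hq : I.Feasible q) :
    ∑ g, I.s q g = ∑ g, ∑ a ∈ I.Asubg g, I.Δ g a * I.Jg g a
      - ∑ a ∈ I.Asub, (∑ g ∈ I.Ga a, I.Δ g a * q g a) * I.J a := by
  unfold s
  rw [Finset.sum_sub_distrib]
  congr 1
  have hset : ∀ g, I.Asubg g ∩ I.Asub = I.Asub.filter (fun a => g ∈ I.Ga a) := by
    intro g
    ext a
    simp only [Finset.mem_inter, Finset.mem_filter]
    constructor
    · rintro ⟨h1, h2⟩
      exact ⟨h2, (I.mem_Ga_iff).2 ((I.mem_Asubg_iff).1 h1).1⟩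
    · rintro ⟨h1, h2⟩
      exact ⟨(I.mem_Asub_iff).1 h1 g h2, h1⟩
  calc ∑ g, ∑ a ∈ I.Asubg g ∩ I.Asub, I.Δ g a * q g a * I.J a
      = ∑ g, ∑ a ∈ I.Asub, if g ∈ I.Ga a then I.Δ g a * q g a * I.J a else 0 := by
        refine Finset.sum_congr rfl fun g _ => ?_
        rw [hset g, Finset.sum_filter]
    _ = ∑ a ∈ I.Asub, ∑ g, if g ∈ I.Ga a then I.Δ g a * q g a * I.J a else 0 :=
        Finset.sum_comm
    _ = ∑ a ∈ I.Asub, (∑ g ∈ I.Ga a, I.Δ g a * q g a) * I.J a := by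
        refine Finset.sum_congr rfl fun a _ => ?_
        rw [Finset.sum_mul]
        rw [show I.Ga a = Finset.univ.filter (fun g => g ∈ I.Ga a) by
          simp]
        rw [Finset.sum_filter]
        simp

lemma attain_eq {q : G → A → ℝ} (hq : I.Feasible q)
    (hopt : ∀ a ∈ I.Asub, ∃ g ∈ I.Ga a,
        I.Δ g a = ((I.Ga a).inf' (I.Ga_nonempty a) fun g' => I.Δ g' a) ∧ q g a = 1) :
    ∑ g, I.s q g =
      ∑ g, ∑ a ∈ I.Asubg g, I.Δ g a * I.Jg g a
        - ∑ a ∈ I.Asub, ((I.Ga a).inf' (I.Ga_nonempty a) fun g => I.Δ g a) * I.J a := by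
  rw [I.sum_s_eq hq]
  congr 1
  refine Finset.sum_congr rfl fun a ha => ?_
  obtain ⟨g, hg, heq, hone⟩ := hopt a ha
  congr 1
  have hzero : ∀ g' ∈ I.Ga a, g' ≠ g → q g' a = 0 := by
    intro g' hg' hne
    have hsum := I.sum_q_eq_one hq ha
    rw [← Finset.add_sum_erase _ _ hg, hone] at hsum
    have h0 : ∑ g'' ∈ (I.Ga a).erase g, q g'' a = 0 := by linarith
    have := (Finset.sum_eq_zero_iff_of_nonneg fun g'' _ => hq.1 g'' a).1 h0
    exact this g' (Finset.mem_erase.2 ⟨hne, hg'⟩)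
  rw [Finset.sum_eq_single_of_mem g hg]
  · rw [hone, heq, mul_one]
  · intro g' hg' hne
    rw [hzero g' hg' hne, mul_zero]

end GroupedBandit

end Aux

theorem utilitarian_optimum {A G : Type*} [Fintype A] [Fintype G]
    (I : GroupedBandit A G) (hθ : Function.Injective I.θ) :
    IsGreatest {x : ℝ | ∃ q : G → A → ℝ, I.Feasible q ∧ x = ∑ g, I.s q g}
      (∑ g, ∑ a ∈ I.Asubg g, I.Δ g a * I.Jg g a
        - ∑ a ∈ I.Asub, ((I.Ga a).inf' (I.Ga_nonempty a) fun g => I.Δ g a) * I.J a) ∧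
    (∀ q : G → A → ℝ, I.Feasible q →
      (∀ a ∈ I.Asub, ∃ g ∈ I.Ga a,
          I.Δ g a = ((I.Ga a).inf' (I.Ga_nonempty a) fun g' => I.Δ g' a) ∧ q g a = 1) →
      ∑ g, I.s q g =
        ∑ g, ∑ a ∈ I.Asubg g, I.Δ g a * I.Jg g a
          - ∑ a ∈ I.Asub, ((I.Ga a).inf' (I.Ga_nonempty a) fun g => I.Δ g a) * I.J a) := by
  classical
  refine ⟨⟨?_, ?_⟩, fun q hq hopt => I.attain_eq hq hopt⟩
  · -- membership: construct an explicit maximizer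
    have hch : ∀ a : A, ∃ g ∈ I.Ga a,
        I.Δ g a = ((I.Ga a).inf' (I.Ga_nonempty a) fun g' => I.Δ g' a) := by
      intro a
      obtain ⟨g, hg, hgeq⟩ := Finset.exists_mem_eq_inf' (I.Ga_nonempty a) fun g => I.Δ g a
      exact ⟨g, hg, hgeq.symm⟩
    choose ga hga hgaeq using hch
    set q : G → A → ℝ := fun g a => if a ∈ I.Asub ∧ g = ga a then 1 else 0 with hqdef
    have hfeas : I.Feasible q := by
      refine ⟨fun g a => by positivity, fun a ha => ?_, fun g a h => ?_⟩
      · simp only [hqdef, ha, true_and]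
        rw [Finset.sum_ite_eq' Finset.univ (ga a) (fun _ => (1:ℝ))]
        simp
      · simp only [hqdef, ite_eq_right_iff]
        rintro ⟨h1, rfl⟩
        exact absurd ⟨h1, (I.mem_Ga_iff).1 (hga a)⟩ h
    refine ⟨q, hfeas, (I.attain_eq hfeas fun a ha => ?_).symm⟩
    exact ⟨ga a, hga a, hgaeq a, by simp [hqdef, ha]⟩
  · -- upper bound
    rintro x ⟨q, hq, rfl⟩
    rw [I.sum_s_eq hq]
    have key : ∀ a ∈ I.Asub,
        ((I.Ga a).inf' (I.Ga_nonempty a) fun g => I.Δ g a) * I.J a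
          ≤ (∑ g ∈ I.Ga a, I.Δ g a * q g a) * I.J a := by
      intro a ha
      refine mul_le_mul_of_nonneg_right ?_ (le_of_lt (I.J_pos ha))
      calc ((I.Ga a).inf' (I.Ga_nonempty a) fun g => I.Δ g a)
          = ∑ g ∈ I.Ga a, ((I.Ga a).inf' (I.Ga_nonempty a) fun g' => I.Δ g' a) * q g a := by
            rw [← Finset.mul_sum, I.sum_q_eq_one hq ha, mul_one]
        _ ≤ ∑ g ∈ I.Ga a, I.Δ g a * q g a := by
            refine Finset.sum_le_sum fun g hg => ?_
            exact mul_le_mul_of_nonneg_right (Finset.inf'_le _ hg) (hq.1 g a)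
    have := Finset.sum_le_sum key
    linarith
end

section
/- Consider a grouped K-armed bandit instance and let q* be a maximizer of the Nash program P(θ) with f(q*) > −∞ (so s^g(q*) > 0 for every group g). If q*^g(a) > 0 for some arm a ∈ 𝒜_sub and group g ∈ 𝒢_a, then for every group h ∈ 𝒢_a one has s^g(q*) ≥ s^h(q*)·Δ^g(a)/Δ^h(a). -/
open scoped Classical
open Finset

section Aux

lemma klB_pos {p q : ℝ} (hp : 0 < p) (hq1 : q < 1) (hpq : p < q) : 0 < klB p q := by
  have hq0 : 0 < q := hp.trans hpq
  have hp1 : p < 1 := hpq.trans hq1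
  have hne : q / p ≠ 1 := by
    intro hcontr
    rw [div_eq_one_iff_eq (ne_of_gt hp)] at hcontr
    linarith
  have h1 : Real.log (q / p) < q / p - 1 :=
    Real.log_lt_sub_one_of_pos (by positivity) hne
  have h2 : Real.log ((1 - q) / (1 - p)) ≤ (1 - q) / (1 - p) - 1 :=
    Real.log_le_sub_one_of_pos (by apply div_pos <;> linarith)
  have hlog1 : Real.log (p / q) = - Real.log (q / p) := by
    rw [← Real.log_inv]; congr 1; rw [inv_div]
  have hlog2 : Real.log ((1 - p) / (1 - q)) = - Real.log ((1 - q) / (1 - p)) := by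
    rw [← Real.log_inv]; congr 1; rw [inv_div]
  have c1 : p * (q / p - 1) = q - p := by field_simp
  have hne2 : (1:ℝ) - p ≠ 0 := by linarith
  have c2 : (1 - p) * ((1 - q) / (1 - p) - 1) = p - q := by field_simp; ring
  unfold klB
  rw [hlog1, hlog2]
  nlinarith [mul_lt_mul_of_pos_left h1 hp,
    mul_le_mul_of_nonneg_left h2 (by linarith : (0:ℝ) ≤ 1 - p)]

end Aux

/-- (KKT condition for the Nash program.) If `qstar` maximizes `P(θ)` with
finite value and `qstar^g(a) > 0` for some `a ∈ 𝒜_sub` and `g ∈ 𝒢_a`, then for every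
`h ∈ 𝒢_a` one has `s^g(qstar) ≥ s^h(qstar) · Δ^g(a)/Δ^h(a)`. -/
theorem nash_kkt_ratio {A G : Type*} [Fintype A] [Fintype G]
    (I : GroupedBandit A G) (hθ : Function.Injective I.θ)
    (qstar : G → A → ℝ) (hq : I.NashOptimal qstar)
    (a : A) (ha : a ∈ I.Asub) (g : G) (hg : g ∈ I.Ga a) (hpos : 0 < qstar g a)
    (h : G) (hh : h ∈ I.Ga a) :
    I.s qstar h * (I.Δ g a / I.Δ h a) ≤ I.s qstar g := by
  classical
  -- basic membership facts
  have hga : a ∈ I.acc g := by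
    simpa [GroupedBandit.Ga] using hg
  have hsub : ∀ k ∈ I.Ga a, a ∈ I.Asubg k := by
    simpa [GroupedBandit.Asub] using ha
  have hθlt : ∀ k ∈ I.Ga a, I.θ a < I.OPT k := by
    intro k hk
    have := hsub k hk
    simpa [GroupedBandit.Asubg] using (Finset.mem_filter.mp this).2
  have hΔg : 0 < I.Δ g a := by
    have := hθlt g hg; unfold GroupedBandit.Δ; linarith
  have hΔh : 0 < I.Δ h a := by
    have := hθlt h hh; unfold GroupedBandit.Δ; linarith
  -- J a > 0
  have hOPTlt1 : ∀ k : G, I.OPT k < 1 := by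
    intro k
    obtain ⟨b, hb, hbe⟩ := Finset.exists_mem_eq_sup' (I.acc_nonempty k) I.θ
    rw [GroupedBandit.OPT, hbe]
    exact (I.θ_mem b).2
  have hJg : 0 < I.Jg g a := by
    unfold GroupedBandit.Jg
    have := klB_pos (I.θ_mem a).1 (hOPTlt1 g) (hθlt g hg)
    positivity
  have hJ : 0 < I.J a :=
    lt_of_lt_of_le hJg (Finset.le_sup' (fun k => I.Jg k a) hg)
  -- trivial case h = g
  by_cases hgh : h = g
  · subst hgh
    rw [div_self (ne_of_gt hΔg), mul_one]
  -- main case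
  set sg := I.s qstar g with hsg_def
  set sh := I.s qstar h with hsh_def
  have hsgpos : 0 < sg := hq.2.1 g
  have hshpos : 0 < sh := hq.2.1 h
  set D := I.Δ g a with hD_def
  set E := I.Δ h a with hE_def
  set Jv := I.J a with hJ_def
  suffices hkey : sh * D ≤ sg * E by
    have : sh * (D / E) = sh * D / E := (mul_div_assoc _ _ _).symm
    rw [this, div_le_iff₀ hΔh]
    exact hkey
  by_contra hlt
  push_neg at hlt
  set ε := min (min (qstar g a) (sh / (2 * E * Jv))) ((sh * D - sg * E) / (2 * D * E * Jv))
    with hε_def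
  have hεpos : 0 < ε := by
    apply lt_min (lt_min hpos _) _
    · positivity
    · apply div_pos (by linarith) (by positivity)
  have hε1 : ε ≤ qstar g a := (min_le_left _ _).trans (min_le_left _ _)
  have hε2 : ε ≤ sh / (2 * E * Jv) := (min_le_left _ _).trans (min_le_right _ _)
  have hε3 : ε ≤ (sh * D - sg * E) / (2 * D * E * Jv) := min_le_right _ _
  have hεE : ε * E * Jv < sh := by
    have := (le_div_iff₀ (by positivity : (0:ℝ) < 2 * E * Jv)).mp hε2
    nlinarith
  -- the perturbed allocation
  set q' : G → A → ℝ := fun k =>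
    if k = g then Function.update (qstar g) a (qstar g a + (-ε))
    else if k = h then Function.update (qstar h) a (qstar h a + ε)
    else qstar k with hq'_def
  have hq'g : q' g = Function.update (qstar g) a (qstar g a + (-ε)) := by
    simp [hq'_def]
  have hq'h : q' h = Function.update (qstar h) a (qstar h a + ε) := by
    simp [hq'_def, hgh]
  have hq'other : ∀ k, k ≠ g → k ≠ h → q' k = qstar k := by
    intro k h1 h2; simp [hq'_def, h1, h2]
  -- generic computation of the perturbed s
  have hskey : ∀ (k : G) (c : ℝ), a ∈ I.Asubg k →
      (∑ x ∈ I.Asubg k ∩ I.Asub,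
          I.Δ k x * (Function.update (qstar k) a (qstar k a + c)) x * I.J x)
        = (∑ x ∈ I.Asubg k ∩ I.Asub, I.Δ k x * qstar k x * I.J x)
          + c * (I.Δ k a * I.J a) := by
    intro k c hak
    have haS : a ∈ I.Asubg k ∩ I.Asub := Finset.mem_inter.mpr ⟨hak, ha⟩
    have hcong : ∀ x ∈ I.Asubg k ∩ I.Asub,
        I.Δ k x * (Function.update (qstar k) a (qstar k a + c)) x * I.J x
          = I.Δ k x * qstar k x * I.J x
            + (if x = a then c * (I.Δ k a * I.J a) else 0) := by
      intro x hx
      rcases eq_or_ne x a with rfl | hxa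
      · simp [Function.update_self]; ring
      · simp [Function.update_of_ne hxa, hxa]
    rw [Finset.sum_congr rfl hcong, Finset.sum_add_distrib,
      Finset.sum_ite_eq' _ a (fun _ => c * (I.Δ k a * I.J a)), if_pos haS]
  have hs'g : I.s q' g = sg + ε * (D * Jv) := by
    unfold GroupedBandit.s
    rw [hq'g, hskey g (-ε) (hsub g hg)]
    unfold GroupedBandit.s at hsg_def
    rw [hsg_def]; ring
  have hs'h : I.s q' h = sh - ε * (E * Jv) := by
    unfold GroupedBandit.s
    rw [hq'h, hskey h ε (hsub h hh)]
    unfold GroupedBandit.s at hsh_def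
    rw [hsh_def]; ring
  have hs'other : ∀ k, k ≠ g → k ≠ h → I.s q' k = I.s qstar k := by
    intro k h1 h2
    unfold GroupedBandit.s
    rw [hq'other k h1 h2]
  -- feasibility of q'
  obtain ⟨hnn, hsum1, hzero⟩ := hq.1
  have hfeas : I.Feasible q' := by
    refine ⟨?_, ?_, ?_⟩
    · intro k b
      rcases eq_or_ne k g with rfl | hkg
      · rw [hq'g]
        rcases eq_or_ne b a with rfl | hba
        · rw [Function.update_self]; linarith
        · rw [Function.update_of_ne hba]; exact hnn k b
      rcases eq_or_ne k h with rfl | hkh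
      · rw [hq'h]
        rcases eq_or_ne b a with rfl | hba
        · rw [Function.update_self]
          have := hnn k b; linarith
        · rw [Function.update_of_ne hba]; exact hnn k b
      · rw [hq'other k hkg hkh]; exact hnn k b
    · intro b hb
      rcases eq_or_ne b a with rfl | hba
      · have hterm : ∀ k : G, q' k b = qstar k b
            + (if k = g then -ε else if k = h then ε else 0) := by
          intro k
          rcases eq_or_ne k g with rfl | hkg
          · rw [hq'g, Function.update_self]; simp
          rcases eq_or_ne k h with rfl | hkh
          · rw [hq'h, Function.update_self]; simp [hkg]
          · rw [hq'other k hkg hkh]; simp [hkg, hkh]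
        rw [Finset.sum_congr rfl (fun k _ => hterm k), Finset.sum_add_distrib]
        have hzsum : (∑ k : G, (if k = g then -ε else if k = h then ε else 0)) = 0 := by
          rw [Finset.sum_eq_add_of_mem g h (Finset.mem_univ g) (Finset.mem_univ h)
            (fun hc => hgh hc.symm) (fun c _ hc => by simp [hc.1, hc.2])]
          simp [hgh]
        rw [hzsum, hsum1 b hb, add_zero]
      · have : ∀ k : G, q' k b = qstar k b := by
          intro k
          rcases eq_or_ne k g with rfl | hkg
          · rw [hq'g, Function.update_of_ne hba]
          rcases eq_or_ne k h with rfl | hkh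
          · rw [hq'h, Function.update_of_ne hba]
          · rw [hq'other k hkg hkh]
        rw [Finset.sum_congr rfl (fun k _ => this k)]
        exact hsum1 b hb
    · intro k b hbk
      rcases eq_or_ne k g with rfl | hkg
      · rcases eq_or_ne b a with rfl | hba
        · exact absurd ⟨ha, hga⟩ hbk
        · rw [hq'g, Function.update_of_ne hba]; exact hzero k b hbk
      rcases eq_or_ne k h with rfl | hkh
      · rcases eq_or_ne b a with rfl | hba
        · exact absurd ⟨ha, by simpa [GroupedBandit.Ga] using hh⟩ hbk
        · rw [hq'h, Function.update_of_ne hba]; exact hzero k b hbk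
      · rw [hq'other k hkg hkh]; exact hzero k b hbk
  -- positivity of s q'
  have hspos : ∀ k, 0 < I.s q' k := by
    intro k
    rcases eq_or_ne k g with rfl | hkg
    · rw [hs'g]
      have : 0 < ε * (D * Jv) := by positivity
      linarith
    rcases eq_or_ne k h with rfl | hkh
    · rw [hs'h]; nlinarith [hεE]
    · rw [hs'other k hkg hkh]; exact hq.2.1 k
  -- optimality
  have hopt := hq.2.2 q' hfeas hspos
  have hdiff : (∑ k : G, (Real.log (I.s q' k) - Real.log (I.s qstar k))) ≤ 0 := by
    rw [Finset.sum_sub_distrib]; linarith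
  have hdiff2 : (∑ k : G, (Real.log (I.s q' k) - Real.log (I.s qstar k)))
      = (Real.log (I.s q' g) - Real.log sg) + (Real.log (I.s q' h) - Real.log sh) := by
    rw [Finset.sum_eq_add_of_mem g h (Finset.mem_univ g) (Finset.mem_univ h)
      (fun hc => hgh hc.symm)
      (fun c _ hc => by rw [hs'other c hc.1 hc.2]; ring)]
  have hlogle : Real.log (I.s q' g) + Real.log (I.s q' h) ≤ Real.log sg + Real.log sh := by
    rw [hdiff2] at hdiff; linarith
  have hprod : I.s q' g * I.s q' h ≤ sg * sh := by
    rw [← Real.log_le_log_iff (mul_pos (hspos g) (hspos h)) (mul_pos hsgpos hshpos),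
      Real.log_mul (ne_of_gt (hspos g)) (ne_of_gt (hspos h)),
      Real.log_mul (ne_of_gt hsgpos) (ne_of_gt hshpos)]
    exact hlogle
  rw [hs'g, hs'h] at hprod
  -- derive contradiction
  have hε3' : ε * (2 * D * E * Jv) ≤ sh * D - sg * E :=
    (le_div_iff₀ (by positivity)).mp hε3
  nlinarith [hprod, mul_le_mul_of_nonneg_left hε3' (mul_pos hεpos hJ).le,
    mul_pos (mul_pos (mul_pos (mul_pos (mul_pos hεpos hεpos) hΔg) hΔh) hJ) hJ,
    mul_pos hεpos hJ, hlt]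
end
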